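/- If a new sample x⁺ has value z⁺ = f(x⁺) with z⁺ ≥ z* − αγ for the current best z*, improvement threshold αγ with α ≥ 0, then the SM lower bound built including x⁺ satisfies f̲(x) ≥ z* − αγ for all x in the ball around x⁺ of radius r = (z⁺ − (z* − αγ))/γ, so no point in that ball can pass the expected improvement test f̲(x) < z* − αγ. -/
import Mathlib


/-- If a new sample `x⁺` fails to improve beyond `z* − αγ`, then the SM lower
bound including `x⁺` is at least `z* − αγ` on the ball of radius
`(z⁺ − (z* − αγ))/γ` around `x⁺`: no point there passes the expected
improvement test. -/
theorem smgo_no_improvement_ball {D n : ℕ} [NeZero n]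
    (xs : Fin n → EuclideanSpace ℝ (Fin D)) (z : Fin n → ℝ)
    (xp : EuclideanSpace ℝ (Fin D)) (zp : ℝ)
    (γ α zstar : ℝ) (hγ : 0 < γ) (hα : 0 ≤ α)
    (hnoimp : zstar - α * γ ≤ zp) :
    ∀ x : EuclideanSpace ℝ (Fin D),
      ‖x - xp‖ ≤ (zp - (zstar - α * γ)) / γ →
      zstar - α * γ ≤
        max (Finset.univ.sup' Finset.univ_nonempty
              (fun k : Fin n => z k - γ * ‖x - xs k‖))
            (zp - γ * ‖x - xp‖) := by
  intro x hx
  have h := (le_div_iff₀ hγ).mp hx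
  have : zstar - α * γ ≤ zp - γ * ‖x - xp‖ := by nlinarith
  exact this.trans (le_max_right _ _)
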